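/- arXiv:math/0410171 — 2 statements merged into one kernel-verified Lean document; each statement's English description precedes it below -/
import Mathlib

section
/- Conditional Borel–Cantelli comparison: let (𝒢_n) be a filtration, (ξ_n) a nonnegative, bounded, (𝒢_n)-adapted sequence, (Γ_n)_{n≥1} a sequence of events with Γ_n ∈ 𝒢_n, and set p_{k-1} = P(Γ_k | 𝒢_{k-1}), Φ_n = ∑_{k=1}^{n} ξ_{k-1} 1_{Γ_k}, Φ*_n = ∑_{k=1}^{n} ξ_{k-1} p_{k-1}. Then almost surely, either both lim sup Φ_n and lim sup Φ*_n are finite, or Φ_n/Φ*_n → 1. -/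
/-!
Write `X_k = ξ_k 1_{Γ_{k+1}} ∈ [0, C]` and `Y_k = E[X_k | 𝒢_k]`, so that `Φ_n = ∑_{k<n} X_k` and
`Φ*_n = ∑_{k<n} Y_k`. Both `M_n = ∑_{k<n} (X_k - Y_k)` and
`W_n = ∑_{k<n} (X_k - Y_k) / (1 + Φ*_{k+1})` are martingales.

`M` has bounded increments, so almost surely it is bounded above iff it is bounded below; when `Φ*`
is bounded, this bounds `Φ = M + Φ*`. The increments of `W` are orthogonal and
`E[(W_{k+1} - W_k)²] ≤ 2C E[1/(1 + Φ*_k) - 1/(1 + Φ*_{k+1})]`, which telescopes, so `W` is bounded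
in `L²` and converges almost surely. When `Φ* → ∞`, Kronecker's lemma turns this into
`M_n / Φ*_n → 0`, that is `Φ_n / Φ*_n → 1`.
-/

open MeasureTheory Filter Finset Topology
open scoped NNReal

theorem Filter.Tendsto.kronecker {x b : ℕ → ℝ} {c : ℝ}
    (hx : Tendsto (fun n => ∑ k ∈ range n, x k) atTop (𝓝 c))
    (hb0 : 0 < b 0) (hbm : Monotone b) (hbt : Tendsto b atTop atTop) :
    Tendsto (fun n => (∑ k ∈ range (n + 1), b k * x k) / b n) atTop (𝓝 0) := by
  set s : ℕ → ℝ := fun n => ∑ k ∈ range n, x k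
  set e : ℕ → ℝ := fun n => ∑ k ∈ range n, (b (k + 1) - b k) * (s (k + 1) - c)
  have hb : ∀ n, 0 < b n := fun n => hb0.trans_le (hbm n.zero_le)
  have hs : Tendsto (fun n => s (n + 1) - c) atTop (𝓝 0) := by
    simpa using ((tendsto_add_atTop_iff_nat 1).2 hx).sub_const c
  -- Abel summation; `e n / b n → 0` because `s (k + 1) → c` and the weights `b (k + 1) - b k`
  -- have divergent sum.
  have hparts : ∀ n,
      ∑ k ∈ range (n + 1), b k * x k = b n * s (n + 1) - (e n + c * (b n - b 0)) := by
    intro n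
    have hc : ∑ k ∈ range n, (b (k + 1) - b k) * c = c * (b n - b 0) := by
      rw [← sum_mul, sum_range_sub, mul_comm]
    simp only [e, mul_sub, sum_sub_distrib, hc, sub_add_cancel]
    simpa using sum_range_by_parts b x (n + 1)
  have he : e =o[atTop] b := by
    have hinc : ∀ k, 0 ≤ b (k + 1) - b k := fun k => sub_nonneg.2 (hbm k.le_succ)
    have hterm : (fun k => (b (k + 1) - b k) * (s (k + 1) - c)) =o[atTop]
        fun k => b (k + 1) - b k := by
      simpa using (Asymptotics.isBigO_refl (fun k => b (k + 1) - b k) atTop).mul_isLittleO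
        ((Asymptotics.isLittleO_one_iff ℝ).2 hs)
    have htel : ∀ n, ∑ k ∈ range n, (b (k + 1) - b k) = b n - b 0 := sum_range_sub b
    have hsum := hterm.sum_range hinc
      ((tendsto_atTop_add_const_right _ (-b 0) hbt).congr fun n => by rw [htel, sub_eq_add_neg])
    simp only [htel] at hsum
    refine hsum.trans_isBigO (Asymptotics.IsBigO.of_bound 1 (Eventually.of_forall fun n => ?_))
    have := hbm n.zero_le
    rw [one_mul, Real.norm_of_nonneg (by linarith), Real.norm_of_nonneg (hb n).le]
    linarith
  have hkey : ∀ n, (∑ k ∈ range (n + 1), b k * x k) / b n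
      = (s (n + 1) - c) + c * b 0 / b n - e n / b n := by
    intro n
    rw [hparts]
    field_simp [(hb n).ne']
    ring
  simp only [hkey]
  simpa using (hs.add (tendsto_const_nhds.div_atTop hbt)).sub he.tendsto_div_nhds_zero

theorem tendsto_sum_div_sum_of_tendsto_sum_inv_mul {x y : ℕ → ℝ} {c : ℝ} (hy : ∀ k, 0 ≤ y k)
    (hy_top : Tendsto (fun n => ∑ k ∈ range n, y k) atTop atTop)
    (hconv : Tendsto (fun n => ∑ k ∈ range n, (1 + ∑ j ∈ range (k + 1), y j)⁻¹ * (x k - y k))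
      atTop (𝓝 c)) :
    Tendsto (fun n => (∑ k ∈ range n, x k) / ∑ k ∈ range n, y k) atTop (𝓝 1) := by
  set S : ℕ → ℝ := fun n => ∑ k ∈ range n, y k
  set D : ℕ → ℝ := fun n => ∑ k ∈ range n, (x k - y k)
  have hS : Monotone S := (sum_mono_set_of_nonneg hy).comp range_mono
  have hS0 : ∀ n, 0 ≤ S n := fun n => sum_nonneg fun k _ => hy k
  have hD : Tendsto (fun n => D n / (1 + S n)) atTop (𝓝 0) := by
    rw [← tendsto_add_atTop_iff_nat 1]
    refine (hconv.kronecker (b := fun k => 1 + S (k + 1)) (by linarith [hS0 1])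
      (fun _ _ h => by simpa using hS (Nat.succ_le_succ h))
      (tendsto_atTop_add_const_left _ 1 (hy_top.comp (tendsto_add_atTop_nat 1)))).congr
      fun n => ?_
    congr 1
    refine sum_congr rfl fun k _ => ?_
    rw [← mul_assoc, mul_inv_cancel₀ (by linarith [hS0 (k + 1)]), one_mul]
  have hpos : ∀ᶠ n in atTop, 0 < S n := hy_top.eventually_gt_atTop 0
  have hratio : Tendsto (fun n => (1 + S n) / S n) atTop (𝓝 1) := by
    refine (by simpa using hy_top.inv_tendsto_atTop.const_add 1 :
      Tendsto (fun n => 1 + (S n)⁻¹) atTop (𝓝 1)).congr' ?_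
    filter_upwards [hpos] with n hn
    field_simp
    ring
  refine (by simpa using tendsto_const_nhds.add (hD.mul hratio) :
    Tendsto (fun n => 1 + D n / (1 + S n) * ((1 + S n) / S n)) atTop (𝓝 1)).congr' ?_
  filter_upwards [hpos] with n hn
  have h1 : 0 < 1 + S n := by linarith
  simp only [D, S, sum_sub_distrib] at hn h1 ⊢
  field_simp
  ring

/-- The relation `Φ_n ≍ Φ*_n` between the partial sums `Φ_n` of `x` and `Φ*_n` of `y`. -/
def PartialSumsComparable (x y : ℕ → ℝ) : Prop :=
  (BddAbove (Set.range fun n => ∑ k ∈ range n, x k) ∧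
      BddAbove (Set.range fun n => ∑ k ∈ range n, y k)) ∨
    Tendsto (fun n => (∑ k ∈ range n, x k) / ∑ k ∈ range n, y k) atTop (𝓝 1)

theorem partialSumsComparable_of_tendsto_sum_inv_mul {x y : ℕ → ℝ}
    (hx : ∀ k, 0 ≤ x k) (hy : ∀ k, 0 ≤ y k)
    (hD : BddBelow (Set.range fun n => ∑ k ∈ range n, (x k - y k)) →
      BddAbove (Set.range fun n => ∑ k ∈ range n, (x k - y k)))
    (hconv : ∃ c, Tendsto
      (fun n => ∑ k ∈ range n, (1 + ∑ j ∈ range (k + 1), y j)⁻¹ * (x k - y k)) atTop (𝓝 c)) :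
    PartialSumsComparable x y := by
  by_cases hS : BddAbove (Set.range fun n => ∑ k ∈ range n, y k)
  · left
    obtain ⟨K, hK⟩ := hS
    have hyK : ∀ n, ∑ k ∈ range n, y k ≤ K := fun n => hK ⟨n, rfl⟩
    obtain ⟨K', hK'⟩ := hD ⟨-K, by
      rintro _ ⟨n, rfl⟩
      simp only [sum_sub_distrib]
      linarith [hyK n, sum_nonneg fun k (_ : k ∈ range n) => hx k]⟩
    refine ⟨⟨K' + K, ?_⟩, ⟨K, hK⟩⟩
    rintro _ ⟨n, rfl⟩
    have := hK' ⟨n, rfl⟩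
    simp only [sum_sub_distrib] at this
    linarith [hyK n]
  · right
    obtain ⟨c, hc⟩ := hconv
    exact tendsto_sum_div_sum_of_tendsto_sum_inv_mul hy
      (tendsto_atTop_atTop_of_monotone' ((sum_mono_set_of_nonneg hy).comp range_mono) hS) hc

section Orthogonality

variable {Ω : Type*} {m m0 : MeasurableSpace Ω} {μ : Measure Ω} [IsFiniteMeasure μ]
  {h X Y : Ω → ℝ}

theorem condExp_mul_sub_eq_zero (hm : m ≤ m0) (hh : StronglyMeasurable[m] h)
    (hX : Integrable X μ) (hY : StronglyMeasurable[m] Y) (hXY : μ[X | m] =ᵐ[μ] Y)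
    (hhXY : Integrable (h * (X - Y)) μ) :
    μ[h * (X - Y) | m] =ᵐ[μ] 0 := by
  have hYi : Integrable Y μ := integrable_condExp.congr hXY
  filter_upwards [condExp_mul_of_stronglyMeasurable_left hh hhXY (hX.sub hYi),
    condExp_sub hX hYi m, hXY] with ω hpull hsub hω
  simp [hpull, hsub, hω, condExp_of_stronglyMeasurable hm hY hYi]

theorem integral_mul_sub_eq_zero (hm : m ≤ m0) (hh : StronglyMeasurable[m] h)
    (hX : Integrable X μ) (hY : StronglyMeasurable[m] Y) (hXY : μ[X | m] =ᵐ[μ] Y)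
    (hhXY : Integrable (h * (X - Y)) μ) :
    ∫ ω, h ω * (X ω - Y ω) ∂μ = 0 := by
  rw [← integral_condExp hm]
  exact integral_eq_zero_of_ae (condExp_mul_sub_eq_zero hm hh hX hY hXY hhXY)

end Orthogonality

namespace MeasureTheory.Martingale

variable {Ω : Type*} {m0 : MeasurableSpace Ω} {μ : Measure Ω} [IsFiniteMeasure μ]
  {ℱ : Filtration ℕ m0} {f : ℕ → Ω → ℝ}

theorem integral_sq_eq_add_sum (hf : Martingale f ℱ μ) (hL2 : ∀ n, MemLp (f n) 2 μ) (n : ℕ) :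
    ∫ ω, f n ω ^ 2 ∂μ =
      ∫ ω, f 0 ω ^ 2 ∂μ + ∑ k ∈ range n, ∫ ω, (f (k + 1) ω - f k ω) ^ 2 ∂μ := by
  induction n with
  | zero => simp
  | succ n ih =>
    have hΔ : MemLp (f (n + 1) - f n) 2 μ := (hL2 _).sub (hL2 n)
    have hcross : Integrable (f n * (f (n + 1) - f n)) μ := (hL2 n).integrable_mul hΔ
    have horth : ∫ ω, f n ω * (f (n + 1) ω - f n ω) ∂μ = 0 :=
      integral_mul_sub_eq_zero (ℱ.le n) (hf.stronglyAdapted n) (hf.integrable _)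
        (hf.stronglyAdapted n) (hf.condExp_ae_eq n.le_succ) hcross
    have hsq : ∀ ω, f (n + 1) ω ^ 2
        = f n ω ^ 2 + 2 * (f n ω * (f (n + 1) ω - f n ω)) + (f (n + 1) ω - f n ω) ^ 2 :=
      fun ω => by ring
    have i₁ : Integrable (fun ω => f n ω ^ 2) μ := (hL2 n).integrable_sq
    have i₂ : Integrable (fun ω => 2 * (f n ω * (f (n + 1) ω - f n ω))) μ := hcross.const_mul 2
    have i₃ : Integrable (fun ω => (f (n + 1) ω - f n ω) ^ 2) μ := hΔ.integrable_sq
    have i₁₂ : Integrable (fun ω => f n ω ^ 2 + 2 * (f n ω * (f (n + 1) ω - f n ω))) μ :=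
      i₁.add i₂
    simp_rw [hsq]
    rw [integral_add i₁₂ i₃, integral_add i₁ i₂, integral_const_mul, horth, ih,
      sum_range_succ]
    ring

theorem exists_ae_tendsto_of_integral_sq_le (hf : Martingale f ℱ μ)
    (hL2 : ∀ n, MemLp (f n) 2 μ) {R : ℝ} (hR : ∀ n, ∫ ω, f n ω ^ 2 ∂μ ≤ R) :
    ∀ᵐ ω ∂μ, ∃ c, Tendsto (fun n => f n ω) atTop (𝓝 c) := by
  refine hf.submartingale.exists_ae_tendsto_of_bdd (R := ((R + μ.real Set.univ) / 2).toNNReal)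
    fun n => ?_
  have hint := (hL2 n).integrable (by norm_num)
  -- `|x| ≤ (x ^ 2 + 1) / 2` turns the second-moment bound into a first-moment bound.
  have hL1 : ∫ ω, ‖f n ω‖ ∂μ ≤ (R + μ.real Set.univ) / 2 := by
    calc ∫ ω, ‖f n ω‖ ∂μ ≤ ∫ ω, (f n ω ^ 2 + 1) / 2 ∂μ := by
          refine integral_mono hint.norm
            (((hL2 n).integrable_sq.add (integrable_const 1)).div_const 2) fun ω => ?_
          nlinarith [sq_nonneg (‖f n ω‖ - 1), Real.norm_eq_abs (f n ω), sq_abs (f n ω)]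
      _ = (∫ ω, f n ω ^ 2 ∂μ + μ.real Set.univ) / 2 := by
          rw [integral_div, integral_add (hL2 n).integrable_sq (integrable_const 1)]
          simp
      _ ≤ (R + μ.real Set.univ) / 2 := by linarith [hR n]
  rw [eLpNorm_one_eq_lintegral_enorm, ← ofReal_integral_norm_eq_lintegral_enorm hint]
  exact ENNReal.ofReal_le_ofReal hL1

end MeasureTheory.Martingale

theorem inv_add_sq_mul_le_inv_sub_inv {a y : ℝ} (ha : 0 < a) (hy : 0 ≤ y) :
    (a + y)⁻¹ ^ 2 * y ≤ a⁻¹ - (a + y)⁻¹ := by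
  have hay : 0 < a + y := by linarith
  rw [inv_sub_inv ha.ne' hay.ne', add_sub_cancel_left, inv_pow, ← div_eq_inv_mul]
  exact div_le_div_of_nonneg_left hy (by positivity) (by nlinarith)

theorem inv_one_add_sum_mem_Icc {y : ℕ → ℝ} (hy : ∀ k, 0 ≤ y k) (n : ℕ) :
    (1 + ∑ k ∈ range n, y k)⁻¹ ∈ Set.Icc (0 : ℝ) 1 :=
  have h : 1 ≤ 1 + ∑ k ∈ range n, y k := le_add_of_nonneg_right (sum_nonneg fun k _ => hy k)
  ⟨inv_nonneg.2 (zero_le_one.trans h), inv_le_one_of_one_le₀ h⟩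

section Compensated

variable {Ω : Type*} {m0 : MeasurableSpace Ω} {μ : Measure Ω} [IsFiniteMeasure μ]
  {ℱ : Filtration ℕ m0} {X Y : ℕ → Ω → ℝ}

theorem martingale_sum_mul_sub {H : ℕ → Ω → ℝ} (hH : StronglyAdapted ℱ H)
    (hH_bdd : ∀ k, ∃ K, ∀ ω, |H k ω| ≤ K) (hX : ∀ k, StronglyMeasurable[ℱ (k + 1)] (X k))
    (hX_int : ∀ k, Integrable (X k) μ) (hY : StronglyAdapted ℱ Y)
    (hXY : ∀ k, μ[X k | ℱ k] =ᵐ[μ] Y k) :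
    Martingale (fun n ω => ∑ k ∈ range n, H k ω * (X k ω - Y k ω)) ℱ μ := by
  have hY_int k : Integrable (Y k) μ := integrable_condExp.congr (hXY k)
  have hterm k : Integrable (H k * (X k - Y k)) μ := by
    obtain ⟨K, hK⟩ := hH_bdd k
    exact ((hX_int k).sub (hY_int k)).bdd_mul ((hH k).mono (ℱ.le k)).aestronglyMeasurable
      (c := K) (ae_of_all _ fun ω => by simpa [Real.norm_eq_abs] using hK ω)
  refine martingale_of_condExp_sub_eq_zero_nat (fun n => ?_) (fun n => ?_) (fun n => ?_)
  · refine Finset.stronglyMeasurable_fun_sum _ fun k hk => ?_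
    have hkn : k + 1 ≤ n := mem_range.1 hk
    exact ((hH k).mono (ℱ.mono (by omega))).mul
      (((hX k).mono (ℱ.mono hkn)).sub ((hY k).mono (ℱ.mono (by omega))))
  · exact integrable_finsetSum _ fun k _ => hterm k
  · have hinc : (fun ω => ∑ k ∈ range (n + 1), H k ω * (X k ω - Y k ω))
        - (fun ω => ∑ k ∈ range n, H k ω * (X k ω - Y k ω)) = H n * (X n - Y n) := by
      funext ω
      simp [sum_range_succ]
    rw [hinc]
    exact condExp_mul_sub_eq_zero (ℱ.le n) (hH n) (hX_int n) (hY n) (hXY n) (hterm n)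

theorem stronglyMeasurable_inv_one_add_sum (hY : StronglyAdapted ℱ Y) {m n : ℕ}
    (hnm : n ≤ m + 1) : StronglyMeasurable[ℱ m] fun ω => (1 + ∑ j ∈ range n, Y j ω)⁻¹ :=
  (stronglyMeasurable_const.add (Finset.stronglyMeasurable_fun_sum _ fun j hj =>
    (hY j).mono (ℱ.mono (by have := mem_range.1 hj; omega)))).measurable.inv.stronglyMeasurable

noncomputable def normalizedCompensatedSum (X Y : ℕ → Ω → ℝ) (n : ℕ) (ω : Ω) : ℝ :=
  ∑ k ∈ range n, (1 + ∑ j ∈ range (k + 1), Y j ω)⁻¹ * (X k ω - Y k ω)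

theorem martingale_normalizedCompensatedSum (hX : ∀ k, StronglyMeasurable[ℱ (k + 1)] (X k))
    (hX_int : ∀ k, Integrable (X k) μ) (hY : StronglyAdapted ℱ Y) (hY0 : ∀ k ω, 0 ≤ Y k ω)
    (hXY : ∀ k, μ[X k | ℱ k] =ᵐ[μ] Y k) :
    Martingale (normalizedCompensatedSum X Y) ℱ μ :=
  martingale_sum_mul_sub (fun _ => stronglyMeasurable_inv_one_add_sum hY le_rfl)
    (fun k => ⟨1, fun ω => by
      obtain ⟨h0, h1⟩ := inv_one_add_sum_mem_Icc (hY0 · ω) (k + 1)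
      rwa [abs_of_nonneg h0]⟩) hX hX_int hY hXY

variable {C : ℝ≥0}

theorem abs_normalizedCompensatedSum_le (hXC : ∀ k ω, X k ω ∈ Set.Icc 0 (C : ℝ))
    (hYC : ∀ k ω, Y k ω ∈ Set.Icc 0 (C : ℝ)) (n : ℕ) (ω : Ω) :
    |normalizedCompensatedSum X Y n ω| ≤ n * C := by
  refine (abs_sum_le_sum_abs _ _).trans ?_
  simpa using sum_le_sum fun k (_ : k ∈ range n) => show
      |(1 + ∑ j ∈ range (k + 1), Y j ω)⁻¹ * (X k ω - Y k ω)| ≤ C by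
    obtain ⟨h0, h1⟩ := inv_one_add_sum_mem_Icc (fun j => (hYC j ω).1) (k + 1)
    rw [abs_mul, abs_of_nonneg h0]
    exact (mul_le_of_le_one_left (abs_nonneg _) h1).trans
      (abs_sub_le_of_nonneg_of_le (hXC k ω).1 (hXC k ω).2 (hYC k ω).1 (hYC k ω).2)

theorem integral_sq_inv_mul_sub_le (hX : ∀ k, StronglyMeasurable[ℱ (k + 1)] (X k))
    (hXC : ∀ k ω, X k ω ∈ Set.Icc 0 (C : ℝ)) (hY : StronglyAdapted ℱ Y)
    (hYC : ∀ k ω, Y k ω ∈ Set.Icc 0 (C : ℝ)) (hXY : ∀ k, μ[X k | ℱ k] =ᵐ[μ] Y k) (n : ℕ) :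
    ∫ ω, ((1 + ∑ j ∈ range (n + 1), Y j ω)⁻¹ * (X n ω - Y n ω)) ^ 2 ∂μ ≤
      2 * C * (∫ ω, (1 + ∑ j ∈ range n, Y j ω)⁻¹ ∂μ
        - ∫ ω, (1 + ∑ j ∈ range (n + 1), Y j ω)⁻¹ ∂μ) := by
  set u : Ω → ℝ := fun ω => (1 + ∑ j ∈ range (n + 1), Y j ω)⁻¹
  set v : Ω → ℝ := fun ω => (1 + ∑ j ∈ range n, Y j ω)⁻¹
  have hu ω : u ω ∈ Set.Icc (0 : ℝ) 1 := inv_one_add_sum_mem_Icc (fun j => (hYC j ω).1) _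
  have hv ω : v ω ∈ Set.Icc (0 : ℝ) 1 := inv_one_add_sum_mem_Icc (fun j => (hYC j ω).1) _
  have hu_meas : StronglyMeasurable[ℱ n] u := stronglyMeasurable_inv_one_add_sum hY le_rfl
  have hX_int : Integrable (X n) μ := .of_mem_Icc 0 C
    ((hX n).mono (ℱ.le _)).measurable.aemeasurable (ae_of_all _ (hXC n))
  have hY_int : Integrable (Y n) μ := integrable_condExp.congr (hXY n)
  have hu_int : Integrable u μ := .of_mem_Icc 0 1
    (hu_meas.mono (ℱ.le n)).measurable.aemeasurable (ae_of_all _ hu)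
  have hv_int : Integrable v μ := .of_mem_Icc 0 1
    ((stronglyMeasurable_inv_one_add_sum hY n.le_succ).mono (ℱ.le n)).measurable.aemeasurable
    (ae_of_all _ hv)
  have hu2_int : Integrable ((fun ω => u ω ^ 2) * (X n - Y n)) μ :=
    (hX_int.sub hY_int).bdd_mul (c := 1) ((hu_meas.mono (ℱ.le n)).aestronglyMeasurable.pow 2)
      (ae_of_all _ fun ω => by simpa [abs_of_nonneg (hu ω).1] using (hu ω).2)
  have horth : ∫ ω, u ω ^ 2 * (X n ω - Y n ω) ∂μ = 0 :=
    integral_mul_sub_eq_zero (ℱ.le n) (hu_meas.pow 2) hX_int (hY n) (hXY n) hu2_int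
  -- `(X - Y)² ≤ C (X + Y)` and `u² Y ≤ v - u` split the squared increment into
  -- an orthogonal part and a telescoping part.
  have hpt ω : (u ω * (X n ω - Y n ω)) ^ 2 ≤
      C * (u ω ^ 2 * (X n ω - Y n ω)) + 2 * C * (v ω - u ω) := by
    obtain ⟨hXn0, hXnC⟩ := hXC n ω
    obtain ⟨hYn0, hYnC⟩ := hYC n ω
    have hXY2 : (X n ω - Y n ω) ^ 2 ≤ C * (X n ω + Y n ω) := by nlinarith
    have huv : u ω ^ 2 * Y n ω ≤ v ω - u ω := by
      simpa only [u, v, sum_range_succ, add_assoc] using inv_add_sq_mul_le_inv_sub_inv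
        (zero_lt_one.trans_le (le_add_of_nonneg_right
          (sum_nonneg fun j (_ : j ∈ range n) => (hYC j ω).1))) hYn0
    calc (u ω * (X n ω - Y n ω)) ^ 2 = u ω ^ 2 * (X n ω - Y n ω) ^ 2 := by ring
      _ ≤ u ω ^ 2 * (C * (X n ω + Y n ω)) := mul_le_mul_of_nonneg_left hXY2 (sq_nonneg _)
      _ = C * (u ω ^ 2 * (X n ω - Y n ω)) + 2 * C * (u ω ^ 2 * Y n ω) := by ring
      _ ≤ C * (u ω ^ 2 * (X n ω - Y n ω)) + 2 * C * (v ω - u ω) := by gcongr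
  have i₁ : Integrable (fun ω => C * (u ω ^ 2 * (X n ω - Y n ω))) μ := hu2_int.const_mul _
  have i₂ : Integrable (fun ω => 2 * C * (v ω - u ω)) μ := (hv_int.sub hu_int).const_mul _
  calc ∫ ω, (u ω * (X n ω - Y n ω)) ^ 2 ∂μ
      ≤ ∫ ω, C * (u ω ^ 2 * (X n ω - Y n ω)) + 2 * C * (v ω - u ω) ∂μ :=
        integral_mono_of_nonneg (ae_of_all _ fun ω => sq_nonneg _) (i₁.add i₂) (ae_of_all _ hpt)
    _ = 2 * C * (∫ ω, v ω ∂μ - ∫ ω, u ω ∂μ) := by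
        rw [integral_add i₁ i₂, integral_const_mul, horth, integral_const_mul,
          integral_sub hv_int hu_int]
        ring

theorem integral_sq_normalizedCompensatedSum_le
    (hX : ∀ k, StronglyMeasurable[ℱ (k + 1)] (X k)) (hXC : ∀ k ω, X k ω ∈ Set.Icc 0 (C : ℝ))
    (hY : StronglyAdapted ℱ Y) (hYC : ∀ k ω, Y k ω ∈ Set.Icc 0 (C : ℝ))
    (hXY : ∀ k, μ[X k | ℱ k] =ᵐ[μ] Y k) (hW : Martingale (normalizedCompensatedSum X Y) ℱ μ)
    (hL2 : ∀ n, MemLp (normalizedCompensatedSum X Y n) 2 μ) (n : ℕ) :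
    ∫ ω, normalizedCompensatedSum X Y n ω ^ 2 ∂μ ≤ 2 * C * μ.real Set.univ := by
  set r : ℕ → ℝ := fun n => ∫ ω, (1 + ∑ j ∈ range n, Y j ω)⁻¹ ∂μ
  have hr0 : r 0 = μ.real Set.univ := by simp [r]
  have hr_nonneg : 0 ≤ r n :=
    integral_nonneg fun ω => (inv_one_add_sum_mem_Icc (fun j => (hYC j ω).1) n).1
  have hinc k ω : normalizedCompensatedSum X Y (k + 1) ω - normalizedCompensatedSum X Y k ω
      = (1 + ∑ j ∈ range (k + 1), Y j ω)⁻¹ * (X k ω - Y k ω) := by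
    simp [normalizedCompensatedSum, sum_range_succ]
  calc ∫ ω, normalizedCompensatedSum X Y n ω ^ 2 ∂μ
      = ∑ k ∈ range n, ∫ ω, ((1 + ∑ j ∈ range (k + 1), Y j ω)⁻¹ * (X k ω - Y k ω)) ^ 2 ∂μ := by
        rw [hW.integral_sq_eq_add_sum hL2 n]
        simp only [hinc]
        simp [normalizedCompensatedSum]
    _ ≤ ∑ k ∈ range n, 2 * C * (r k - r (k + 1)) :=
        sum_le_sum fun k _ => integral_sq_inv_mul_sub_le hX hXC hY hYC hXY k
    _ = 2 * C * (r 0 - r n) := by rw [← mul_sum, sum_range_sub']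
    _ ≤ 2 * C * μ.real Set.univ := by
        rw [hr0]
        exact mul_le_mul_of_nonneg_left (by linarith) (by positivity)

theorem ae_partialSumsComparable_of_condExp_eq_of_stronglyAdapted
    (hX : ∀ k, StronglyMeasurable[ℱ (k + 1)] (X k)) (hXC : ∀ k ω, X k ω ∈ Set.Icc 0 (C : ℝ))
    (hY : StronglyAdapted ℱ Y) (hYC : ∀ k ω, Y k ω ∈ Set.Icc 0 (C : ℝ))
    (hXY : ∀ k, μ[X k | ℱ k] =ᵐ[μ] Y k) :
    ∀ᵐ ω ∂μ, PartialSumsComparable (fun k => X k ω) (fun k => Y k ω) := by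
  have hX_int k : Integrable (X k) μ := .of_mem_Icc 0 C
    ((hX k).mono (ℱ.le _)).measurable.aemeasurable (ae_of_all _ (hXC k))
  have hM : Martingale (fun n ω => ∑ k ∈ range n, (X k ω - Y k ω)) ℱ μ := by
    simpa using martingale_sum_mul_sub (H := fun _ _ => 1) (fun _ => stronglyMeasurable_const)
      (fun _ => ⟨1, fun _ => by simp⟩) hX hX_int hY hXY
  have hM_bdd := hM.bddAbove_range_iff_bddBelow_range (R := C) (ae_of_all _ fun ω k => by
    show |∑ i ∈ range (k + 1), (X i ω - Y i ω) - ∑ i ∈ range k, (X i ω - Y i ω)| ≤ C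
    rw [sum_range_succ, add_sub_cancel_left]
    exact abs_sub_le_of_nonneg_of_le (hXC k ω).1 (hXC k ω).2 (hYC k ω).1 (hYC k ω).2)
  have hW := martingale_normalizedCompensatedSum hX hX_int hY (fun k ω => (hYC k ω).1) hXY
  have hL2 n : MemLp (normalizedCompensatedSum X Y n) 2 μ :=
    memLp_of_bounded (ae_of_all _ fun ω => abs_le.1 (abs_normalizedCompensatedSum_le hXC hYC n ω))
      ((hW.stronglyAdapted n).mono (ℱ.le n)).aestronglyMeasurable 2
  have hW_conv := hW.exists_ae_tendsto_of_integral_sq_le hL2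
    (integral_sq_normalizedCompensatedSum_le hX hXC hY hYC hXY hW hL2)
  filter_upwards [hM_bdd, hW_conv] with ω hMω hWω
  exact partialSumsComparable_of_tendsto_sum_inv_mul (fun k => (hXC k ω).1)
    (fun k => (hYC k ω).1) hMω.2 hWω

end Compensated

theorem ae_partialSumsComparable_of_condExp_eq {Ω : Type*} {m0 : MeasurableSpace Ω}
    {μ : Measure Ω} [IsFiniteMeasure μ] {ℱ : Filtration ℕ m0} {X Y : ℕ → Ω → ℝ} {C : ℝ}
    (hX : ∀ k, StronglyMeasurable[ℱ (k + 1)] (X k)) (hXC : ∀ k ω, X k ω ∈ Set.Icc 0 C)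
    (hXY : ∀ k, μ[X k | ℱ k] =ᵐ[μ] Y k) :
    ∀ᵐ ω ∂μ, PartialSumsComparable (fun k => X k ω) (fun k => Y k ω) := by
  -- A version of `μ[X k | ℱ k]` with values in `[0, C]` everywhere.
  set Z : ℕ → Ω → ℝ := fun k ω => max 0 (min (μ[X k | ℱ k] ω) C)
  have hX_int k : Integrable (X k) μ := .of_mem_Icc 0 C
    ((hX k).mono (ℱ.le _)).measurable.aemeasurable (ae_of_all _ (hXC k))
  have hZ k : μ[X k | ℱ k] =ᵐ[μ] Z k := by
    have hle := condExp_mono (m := ℱ k) (hX_int k) (integrable_const C)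
      (ae_of_all _ fun ω => (hXC k ω).2)
    rw [condExp_const (ℱ.le k)] at hle
    filter_upwards [condExp_nonneg (m := ℱ k) (ae_of_all _ fun ω => (hXC k ω).1), hle]
      with ω h0 h1
    simp [Z, min_eq_left h1, max_eq_right (show 0 ≤ μ[X k | ℱ k] ω from h0)]
  have hC : ∀ k ω, X k ω ∈ Set.Icc 0 (C.toNNReal : ℝ) := fun k ω =>
    ⟨(hXC k ω).1, (hXC k ω).2.trans (Real.le_coe_toNNReal C)⟩
  have h := ae_partialSumsComparable_of_condExp_eq_of_stronglyAdapted hX hC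
    (fun k => (measurable_const.max (stronglyMeasurable_condExp.measurable.min
      measurable_const)).stronglyMeasurable)
    (fun k ω => ⟨le_max_left _ _,
      max_le (by positivity) ((min_le_right _ _).trans (Real.le_coe_toNNReal C))⟩) hZ
  filter_upwards [h, ae_all_iff.2 fun k => (hZ k).symm.trans (hXY k)] with ω hω hZY
  rwa [show (fun k => Y k ω) = fun k => Z k ω from funext fun k => (hZY k).symm]

/-- Conditional Borel–Cantelli comparison (Lemma A.1(i) of Tarrès):
with `Φ_n = ∑_{k<n} ξ_k 1_{Γ_{k+1}}` and `Φ*_n = ∑_{k<n} ξ_k P(Γ_{k+1}|𝒢_k)`,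
almost surely either both sequences are bounded or their ratio tends to 1. -/
theorem conditional_borel_cantelli_comparison
    {Ω : Type*} {m0 : MeasurableSpace Ω} (μ : Measure Ω) [IsProbabilityMeasure μ]
    (𝒢 : Filtration ℕ m0)
    (ξ : ℕ → Ω → ℝ) (hξa : StronglyAdapted 𝒢 ξ) (hξ0 : ∀ n ω, 0 ≤ ξ n ω)
    (hξbdd : ∃ C : ℝ, ∀ n ω, ξ n ω ≤ C)
    (Γ : ℕ → Set Ω) (hΓ : ∀ n, MeasurableSet[𝒢 n] (Γ n)) :
    ∀ᵐ ω ∂μ,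
      (BddAbove (Set.range fun n : ℕ =>
          ∑ k ∈ Finset.range n, ξ k ω * Set.indicator (Γ (k + 1)) (fun _ => (1 : ℝ)) ω) ∧
       BddAbove (Set.range fun n : ℕ =>
          ∑ k ∈ Finset.range n,
            ξ k ω * (μ[Set.indicator (Γ (k + 1)) (fun _ => (1 : ℝ)) | 𝒢 k]) ω)) ∨
      Tendsto (fun n : ℕ =>
          (∑ k ∈ Finset.range n, ξ k ω * Set.indicator (Γ (k + 1)) (fun _ => (1 : ℝ)) ω) /
          (∑ k ∈ Finset.range n,
            ξ k ω * (μ[Set.indicator (Γ (k + 1)) (fun _ => (1 : ℝ)) | 𝒢 k]) ω))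
        atTop (nhds 1) := by
  obtain ⟨C, hC⟩ := hξbdd
  set I : ℕ → Ω → ℝ := fun k => Set.indicator (Γ (k + 1)) (fun _ => (1 : ℝ))
  have hI k ω : I k ω ∈ Set.Icc (0 : ℝ) 1 := by
    by_cases hω : ω ∈ Γ (k + 1) <;> simp [I, hω]
  have hI_meas k : StronglyMeasurable[𝒢 (k + 1)] (I k) :=
    stronglyMeasurable_const.indicator (hΓ (k + 1))
  refine ae_partialSumsComparable_of_condExp_eq (C := C) (X := fun k => ξ k * I k)
    (fun k => ((hξa k).mono (𝒢.mono k.le_succ)).mul (hI_meas k))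
    (fun k ω => ⟨mul_nonneg (hξ0 k ω) (hI k ω).1,
      (mul_le_of_le_one_right (hξ0 k ω) (hI k ω).2).trans (hC k ω)⟩) fun k => ?_
  exact condExp_stronglyMeasurable_mul_of_bound (𝒢.le k) (hξa k)
    (.of_mem_Icc 0 1 ((hI_meas k).mono (𝒢.le _)).measurable.aemeasurable (ae_of_all _ (hI k))) C
    (ae_of_all _ fun ω => by simpa [abs_of_nonneg (hξ0 k ω)] using hC k ω)
end

section
/- For the vertex-reinforced random walk on ℤ and any x ∈ ℤ, the event Υ(x-1) ∩ Υ(x+1) equals almost surely the event {Z_∞(x) < ∞}, i.e., the walk visits x only finitely often if and only if both neighbors x-1 and x+1 are 'seldom-visit' sites. -/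
open MeasureTheory Filter

/-- `Znum X n v ω` is `1` plus the number of visits of the walk `X` to the site
`v` up through time `n` (the quantity `Z_n(v)` of the paper), as a real number. -/
noncomputable def Znum {Ω : Type*} (X : ℕ → Ω → ℤ) (n : ℕ) (v : ℤ) (ω : Ω) : ℝ :=
  1 + ∑ i ∈ Finset.range (n + 1), if X i ω = v then (1 : ℝ) else 0

/-- `Y_n(x)`: weighted number of visits to `x` up to time `n`. -/
noncomputable def Ynum {Ω : Type*} (X : ℕ → Ω → ℤ) (n : ℕ) (x : ℤ) (ω : Ω) : ℝ :=
  ∑ k ∈ Finset.Icc 1 n,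
    (if X (k - 1) ω = x then (1 : ℝ) else 0) /
      (Znum X (k - 1) (x - 1) ω + Znum X (k - 1) (x + 1) ω)

/-- `Y⁺_n(x)`: weighted number of crossings from `x` to `x+1` up to time `n`. -/
noncomputable def Yplus {Ω : Type*} (X : ℕ → Ω → ℤ) (n : ℕ) (x : ℤ) (ω : Ω) : ℝ :=
  ∑ k ∈ Finset.Icc 1 n,
    (if X (k - 1) ω = x ∧ X k ω = x + 1 then (1 : ℝ) else 0) / Znum X (k - 1) (x + 1) ω

/-- `Y⁻_n(x)`: weighted number of crossings from `x` to `x-1` up to time `n`. -/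
noncomputable def Yminus {Ω : Type*} (X : ℕ → Ω → ℤ) (n : ℕ) (x : ℤ) (ω : Ω) : ℝ :=
  ∑ k ∈ Finset.Icc 1 n,
    (if X (k - 1) ω = x ∧ X k ω = x - 1 then (1 : ℝ) else 0) / Znum X (k - 1) (x - 1) ω

/-- The event `Υ(x) = {Y_∞(x) < ∞}` (the sums `Y_n(x)` are nondecreasing in `n`,
so finiteness of the limit is boundedness). -/
def Upsilon {Ω : Type*} (X : ℕ → Ω → ℤ) (x : ℤ) : Set Ω :=
  {ω | BddAbove (Set.range fun n => Ynum X n x ω)}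

/-- The event `Υ⁺(x) = {Y⁺_∞(x) < ∞}`. -/
def UpsilonPlus {Ω : Type*} (X : ℕ → Ω → ℤ) (x : ℤ) : Set Ω :=
  {ω | BddAbove (Set.range fun n => Yplus X n x ω)}

/-- The event `Υ⁻(x) = {Y⁻_∞(x) < ∞}`. -/
def UpsilonMinus {Ω : Type*} (X : ℕ → Ω → ℤ) (x : ℤ) : Set Ω :=
  {ω | BddAbove (Set.range fun n => Yminus X n x ω)}

/-- `α⁻_n(y) = Z_n(y-1)/(Z_n(y-1) + Z_n(y+1))`. -/
noncomputable def alphaMinus {Ω : Type*} (X : ℕ → Ω → ℤ) (n : ℕ) (y : ℤ) (ω : Ω) : ℝ :=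
  Znum X n (y - 1) ω / (Znum X n (y - 1) ω + Znum X n (y + 1) ω)

/-- `(X_n)` is a vertex-reinforced random walk on `ℤ` started at `v0`:
it is adapted, starts at `v0`, a.s. makes nearest-neighbor steps, and the
conditional law of each step is proportional to the augmented occupations of
the two neighbors. -/
structure IsVRRW {Ω : Type*} {m0 : MeasurableSpace Ω} (μ : Measure Ω)
    (ℱ : Filtration ℕ m0) (X : ℕ → Ω → ℤ) (v0 : ℤ) : Prop where
  adapted : Adapted ℱ X
  init : ∀ ω, X 0 ω = v0
  nearest : ∀ n, ∀ᵐ ω ∂μ, X (n + 1) ω = X n ω + 1 ∨ X (n + 1) ω = X n ω - 1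
  step : ∀ n, ∀ᵐ ω ∂μ, ∀ x : ℤ,
    (μ[Set.indicator {ω' | X (n + 1) ω' = x} (fun _ => (1 : ℝ)) | ℱ n]) ω =
      if x = X n ω + 1 ∨ x = X n ω - 1 then
        Znum X n x ω / (Znum X n (X n ω - 1) ω + Znum X n (X n ω + 1) ω)
      else 0

/-!
Write `M_n = Ycross_n(y, z) - Y_n(y)` for `z = y ± 1`, where `Ycross_n(y, z)` weighs each jump
`y → z` by `1 / Z(z)` (so `Y⁺(y) = Ycross(y, y + 1)` and `Y⁻(y) = Ycross(y, y - 1)`). By the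
transition rule, the conditional expectation of the next crossing increment is exactly the next
increment of `Y(y)`, so `M` is a martingale with increments in `[-1, 1]`; such a martingale is
a.s. bounded above iff bounded below, and since `Ycross` and `Y` are nonnegative this gives
`Υ(y) = {Ycross_∞(y, z) < ∞}` a.s.

Along a nearest-neighbour path every visit to `x` is a jump from `x - 1` or from `x + 1`, and
`log (Z + 1) - log Z ≤ 1 / Z`; hence
`log Z_n(x) ≤ log Z_0(x) + Ycross_n(x - 1, x) + Ycross_n(x + 1, x)`. Conversely
`Ycross_n(y, z) ≤ Z_n(z)`, so `Z_∞(x) < ∞` iff both crossing sums into `x` are finite.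
-/

open Set

lemma Real.log_add_le_log_add_div {z a : ℝ} (hz : 0 < z) (ha : 0 ≤ a) :
    Real.log (z + a) ≤ Real.log z + a / z := by
  have hza : 0 < z + a := by linarith
  have := Real.log_le_sub_one_of_pos (div_pos hza hz)
  rw [Real.log_div hza.ne' hz.ne', add_div, div_self hz.ne'] at this
  linarith

lemma ite_div_mem_Icc (c : Prop) [Decidable c] {d : ℝ} (hd : 1 ≤ d) :
    (if c then (1 : ℝ) else 0) / d ∈ Icc (0 : ℝ) 1 := by
  split_ifs
  · exact ⟨by positivity, (div_le_one (by linarith)).2 hd⟩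
  · simp

lemma mem_Icc_of_succ_sub_mem_Icc {f : ℕ → ℝ} (h0 : f 0 = 0)
    (h : ∀ n, f (n + 1) - f n ∈ Icc (0 : ℝ) 1) (n : ℕ) : f n ∈ Icc (0 : ℝ) n := by
  induction n with
  | zero => simp [h0]
  | succ n ih =>
    obtain ⟨h₁, h₂⟩ := h n
    push_cast
    constructor <;> linarith [ih.1, ih.2]

lemma bddAbove_range_iff_of_bddAbove_sub_iff_bddBelow_sub {ι : Type*} {a b : ι → ℝ}
    (ha : ∀ i, 0 ≤ a i) (hb : ∀ i, 0 ≤ b i)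
    (h : BddAbove (range fun i => a i - b i) ↔ BddBelow (range fun i => a i - b i)) :
    BddAbove (range a) ↔ BddAbove (range b) := by
  constructor
  · rintro ⟨A, hA⟩
    obtain ⟨B, hB⟩ := h.1 (BddAbove.range_mono a (fun i => by linarith [hb i]) ⟨A, hA⟩)
    exact ⟨A - B, forall_mem_range.2 fun i => by linarith [hA ⟨i, rfl⟩, hB ⟨i, rfl⟩]⟩
  · rintro ⟨B, hB⟩
    obtain ⟨C, hC⟩ := h.2 ⟨-B, forall_mem_range.2 fun i => by linarith [ha i, hB ⟨i, rfl⟩]⟩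
    exact ⟨C + B, forall_mem_range.2 fun i => by linarith [hB ⟨i, rfl⟩, hC ⟨i, rfl⟩]⟩

noncomputable def Ycross {Ω : Type*} (X : ℕ → Ω → ℤ) (n : ℕ) (y z : ℤ) (ω : Ω) : ℝ :=
  ∑ k ∈ Finset.Icc 1 n,
    (if X (k - 1) ω = y ∧ X k ω = z then (1 : ℝ) else 0) / Znum X (k - 1) z ω

section Deterministic

variable {Ω : Type*} {X : ℕ → Ω → ℤ} {ω : Ω}

lemma one_le_Znum (n : ℕ) (v : ℤ) : 1 ≤ Znum X n v ω :=
  le_add_of_nonneg_right (Finset.sum_nonneg fun _ _ => by positivity)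

lemma Znum_pos (n : ℕ) (v : ℤ) : 0 < Znum X n v ω :=
  one_pos.trans_le (one_le_Znum n v)

lemma Znum_succ (n : ℕ) (v : ℤ) :
    Znum X (n + 1) v ω = Znum X n v ω + if X (n + 1) ω = v then 1 else 0 := by
  rw [Znum, Znum, Finset.sum_range_succ, add_assoc]

lemma Ynum_zero (y : ℤ) : Ynum X 0 y ω = 0 := by
  simp [Ynum]

lemma Ynum_succ (n : ℕ) (y : ℤ) :
    Ynum X (n + 1) y ω = Ynum X n y ω +
      (if X n ω = y then 1 else 0) / (Znum X n (y - 1) ω + Znum X n (y + 1) ω) := by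
  simpa [Ynum] using Finset.sum_Icc_succ_top (Nat.le_add_left 1 n) fun k =>
    (if X (k - 1) ω = y then (1 : ℝ) else 0) /
      (Znum X (k - 1) (y - 1) ω + Znum X (k - 1) (y + 1) ω)

lemma Ycross_zero (y z : ℤ) : Ycross X 0 y z ω = 0 := by
  simp [Ycross]

lemma Ycross_succ (n : ℕ) (y z : ℤ) :
    Ycross X (n + 1) y z ω = Ycross X n y z ω +
      (if X n ω = y ∧ X (n + 1) ω = z then 1 else 0) / Znum X n z ω := by
  simpa [Ycross] using Finset.sum_Icc_succ_top (Nat.le_add_left 1 n) fun k =>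
    (if X (k - 1) ω = y ∧ X k ω = z then (1 : ℝ) else 0) / Znum X (k - 1) z ω

lemma Ynum_succ_sub_mem_Icc (n : ℕ) (y : ℤ) :
    Ynum X (n + 1) y ω - Ynum X n y ω ∈ Icc (0 : ℝ) 1 := by
  rw [Ynum_succ, add_sub_cancel_left]
  have h₁ : (1 : ℝ) ≤ Znum X n (y - 1) ω := one_le_Znum n _
  have h₂ : (1 : ℝ) ≤ Znum X n (y + 1) ω := one_le_Znum n _
  exact ite_div_mem_Icc _ (by linarith)

lemma Ycross_succ_sub_mem_Icc (n : ℕ) (y z : ℤ) :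
    Ycross X (n + 1) y z ω - Ycross X n y z ω ∈ Icc (0 : ℝ) 1 := by
  rw [Ycross_succ, add_sub_cancel_left]
  exact ite_div_mem_Icc _ (one_le_Znum n z)

lemma Ynum_mem_Icc (n : ℕ) (y : ℤ) : Ynum X n y ω ∈ Icc (0 : ℝ) n :=
  mem_Icc_of_succ_sub_mem_Icc (f := fun n => Ynum X n y ω) (Ynum_zero y)
    (fun n => Ynum_succ_sub_mem_Icc n y) n

lemma Ycross_mem_Icc (n : ℕ) (y z : ℤ) : Ycross X n y z ω ∈ Icc (0 : ℝ) n :=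
  mem_Icc_of_succ_sub_mem_Icc (f := fun n => Ycross X n y z ω) (Ycross_zero y z)
    (fun n => Ycross_succ_sub_mem_Icc n y z) n

lemma Ycross_le_Znum (n : ℕ) (y z : ℤ) : Ycross X n y z ω ≤ Znum X n z ω := by
  induction n with
  | zero => rw [Ycross_zero]; exact (Znum_pos 0 z).le
  | succ n ih =>
    have hstep : (if X n ω = y ∧ X (n + 1) ω = z then (1 : ℝ) else 0) / Znum X n z ω ≤
        if X (n + 1) ω = z then 1 else 0 := by
      split_ifs with h₁ h₂
      · exact (div_le_one (Znum_pos n z)).2 (one_le_Znum n z)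
      · exact absurd h₁.2 h₂
      · simp
      · simp
    rw [Ycross_succ, Znum_succ]
    linarith

variable (hnear : ∀ n, X (n + 1) ω = X n ω + 1 ∨ X (n + 1) ω = X n ω - 1)
include hnear

lemma log_Znum_le (x : ℤ) (n : ℕ) :
    Real.log (Znum X n x ω) ≤
      Real.log (Znum X 0 x ω) + Ycross X n (x - 1) x ω + Ycross X n (x + 1) x ω := by
  induction n with
  | zero => simp [Ycross_zero]
  | succ n ih =>
    have hvisit : (if X (n + 1) ω = x then (1 : ℝ) else 0) ≤
        (if X n ω = x - 1 ∧ X (n + 1) ω = x then 1 else 0) +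
          (if X n ω = x + 1 ∧ X (n + 1) ω = x then 1 else 0) := by
      have := hnear n
      split_ifs <;> grind
    have hZ := Znum_pos (X := X) (ω := ω) n x
    calc Real.log (Znum X (n + 1) x ω)
        ≤ Real.log (Znum X n x ω) + (if X (n + 1) ω = x then 1 else 0) / Znum X n x ω := by
          rw [Znum_succ]
          exact Real.log_add_le_log_add_div hZ (by positivity)
      _ ≤ Real.log (Znum X n x ω) +
          ((if X n ω = x - 1 ∧ X (n + 1) ω = x then 1 else 0) +
            (if X n ω = x + 1 ∧ X (n + 1) ω = x then 1 else 0)) / Znum X n x ω := by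
          gcongr
      _ ≤ _ := by
          rw [Ycross_succ, Ycross_succ, add_div]
          linarith

lemma bddAbove_Ycross_and_iff_bddAbove_Znum (x : ℤ) :
    (BddAbove (range fun n => Ycross X n (x - 1) x ω) ∧
        BddAbove (range fun n => Ycross X n (x + 1) x ω)) ↔
      BddAbove (range fun n => Znum X n x ω) := by
  constructor
  · rintro ⟨⟨A, hA⟩, ⟨B, hB⟩⟩
    refine ⟨Real.exp (Real.log (Znum X 0 x ω) + A + B), forall_mem_range.2 fun n => ?_⟩
    rw [← Real.log_le_iff_le_exp (Znum_pos n x)]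
    linarith [log_Znum_le hnear x n, hA ⟨n, rfl⟩, hB ⟨n, rfl⟩]
  · intro hZ
    exact ⟨BddAbove.range_mono _ (fun n => Ycross_le_Znum n _ x) hZ,
      BddAbove.range_mono _ (fun n => Ycross_le_Znum n _ x) hZ⟩

end Deterministic

section Martingale

open scoped NNReal

variable {Ω : Type*} {m0 : MeasurableSpace Ω} {μ : Measure Ω} {ℱ : Filtration ℕ m0}
  {X : ℕ → Ω → ℤ} {v0 : ℤ}

lemma MeasureTheory.Adapted.measurableSet_eq (hX : Adapted ℱ X) {k n : ℕ} (hkn : k ≤ n)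
    (v : ℤ) :
    MeasurableSet[ℱ n] {ω | X k ω = v} :=
  hX.measurable_le hkn (measurableSet_singleton v)

lemma measurable_Znum (hX : Adapted ℱ X) {k n : ℕ} (hkn : k ≤ n) (v : ℤ) :
    Measurable[ℱ n] (Znum X k v) :=
  measurable_const.add <| Finset.measurable_sum _ fun i hi =>
    Measurable.ite (hX.measurableSet_eq (by grind) v) measurable_const measurable_const

lemma measurable_Ynum (hX : Adapted ℱ X) {k n : ℕ} (hkn : k ≤ n + 1) (y : ℤ) :
    Measurable[ℱ n] (Ynum X k y) :=
  Finset.measurable_sum _ fun i hi =>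
    have hi : i - 1 ≤ n := by grind
    (Measurable.ite (hX.measurableSet_eq hi y) measurable_const measurable_const).div
      ((measurable_Znum hX hi _).add (measurable_Znum hX hi _))

lemma measurable_Ycross (hX : Adapted ℱ X) (n : ℕ) (y z : ℤ) :
    Measurable[ℱ n] (Ycross X n y z) :=
  Finset.measurable_sum _ fun i hi =>
    have hi : i ≤ n := (Finset.mem_Icc.1 hi).2
    (Measurable.ite ((hX.measurableSet_eq (i.sub_le 1 |>.trans hi) y).inter
        (hX.measurableSet_eq hi z)) measurable_const measurable_const).div
      (measurable_Znum hX (i.sub_le 1 |>.trans hi) z)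

variable [IsFiniteMeasure μ]

lemma integrable_Ynum (hX : Adapted ℱ X) (n : ℕ) (y : ℤ) : Integrable (Ynum X n y) μ :=
  .of_bound ((measurable_Ynum hX n.le_succ y).mono (ℱ.le n) le_rfl).aestronglyMeasurable n
    (ae_of_all _ fun _ => by
      rw [Real.norm_of_nonneg (Ynum_mem_Icc n y).1]; exact (Ynum_mem_Icc n y).2)

lemma integrable_Ycross (hX : Adapted ℱ X) (n : ℕ) (y z : ℤ) :
    Integrable (Ycross X n y z) μ :=
  .of_bound ((measurable_Ycross hX n y z).mono (ℱ.le n) le_rfl).aestronglyMeasurable n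
    (ae_of_all _ fun _ => by
      rw [Real.norm_of_nonneg (Ycross_mem_Icc n y z).1]; exact (Ycross_mem_Icc n y z).2)

namespace IsVRRW

variable (h : IsVRRW μ ℱ X v0) {y z : ℤ} (hz : z = y + 1 ∨ z = y - 1)
include h hz

lemma condExp_Ycross_succ_sub (n : ℕ) :
    μ[Ycross X (n + 1) y z - Ycross X n y z | ℱ n] =ᵐ[μ] Ynum X (n + 1) y - Ynum X n y := by
  set g : Ω → ℝ := fun ω => (if X n ω = y then 1 else 0) / Znum X n z ω
  set I : Ω → ℝ := {ω | X (n + 1) ω = z}.indicator fun _ => 1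
  have hgI : Ycross X (n + 1) y z - Ycross X n y z = g * I := by
    ext ω
    simp only [Pi.sub_apply, Pi.mul_apply, Ycross_succ, add_sub_cancel_left, g, I,
      indicator_apply, mem_ofPred_eq]
    split_ifs <;> simp_all
  have hg : StronglyMeasurable[ℱ n] g :=
    ((Measurable.ite (h.adapted.measurableSet_eq le_rfl y) measurable_const
      measurable_const).div (measurable_Znum h.adapted le_rfl z)).stronglyMeasurable
  have hg_le : ∀ ω, ‖g ω‖ ≤ 1 := fun ω => by
    have hmem := ite_div_mem_Icc (X n ω = y) (one_le_Znum (X := X) (ω := ω) n z)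
    rw [Real.norm_of_nonneg hmem.1]; exact hmem.2
  have hI : Integrable I μ :=
    (integrable_const 1).indicator (h.adapted.measurable (measurableSet_singleton z))
  rw [hgI]
  filter_upwards [condExp_stronglyMeasurable_mul_of_bound (ℱ.le n) hg hI 1 (ae_of_all _ hg_le),
    h.step n] with ω hpull hstep
  rw [hpull, Pi.mul_apply, hstep z, Pi.sub_apply, Ynum_succ, add_sub_cancel_left]
  by_cases hy : X n ω = y
  · subst hy
    have := Znum_pos (X := X) (ω := ω) n z
    simp only [g, if_pos hz, if_true]
    field_simp
  · simp [g, hy]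

lemma martingale_Ycross_sub_Ynum : Martingale (fun n => Ycross X n y z - Ynum X n y) ℱ μ := by
  have hX := h.adapted
  refine martingale_of_condExp_sub_eq_zero_nat (fun n =>
      ((measurable_Ycross hX n y z).sub (measurable_Ynum hX n.le_succ y)).stronglyMeasurable)
    (fun n => (integrable_Ycross hX n y z).sub (integrable_Ynum hX n y)) fun n => ?_
  have hYnum : μ[Ynum X (n + 1) y - Ynum X n y | ℱ n] = Ynum X (n + 1) y - Ynum X n y :=
    condExp_of_stronglyMeasurable (ℱ.le n)
      ((measurable_Ynum hX le_rfl y).sub (measurable_Ynum hX n.le_succ y)).stronglyMeasurable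
      ((integrable_Ynum hX _ y).sub (integrable_Ynum hX n y))
  calc μ[(Ycross X (n + 1) y z - Ynum X (n + 1) y) - (Ycross X n y z - Ynum X n y) | ℱ n]
      = μ[(Ycross X (n + 1) y z - Ycross X n y z) - (Ynum X (n + 1) y - Ynum X n y) | ℱ n] := by
        rw [sub_sub_sub_comm]
    _ =ᵐ[μ] μ[Ycross X (n + 1) y z - Ycross X n y z | ℱ n] -
        μ[Ynum X (n + 1) y - Ynum X n y | ℱ n] :=
        condExp_sub ((integrable_Ycross hX _ y z).sub (integrable_Ycross hX n y z))
          ((integrable_Ynum hX _ y).sub (integrable_Ynum hX n y)) _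
    _ =ᵐ[μ] (Ynum X (n + 1) y - Ynum X n y) - (Ynum X (n + 1) y - Ynum X n y) := by
        rw [hYnum]; exact (h.condExp_Ycross_succ_sub hz n).sub EventuallyEq.rfl
    _ = 0 := sub_self _

lemma ae_bddAbove_Ynum_iff_bddAbove_Ycross :
    ∀ᵐ ω ∂μ, BddAbove (range fun n => Ynum X n y ω) ↔
      BddAbove (range fun n => Ycross X n y z ω) := by
  have hbdd : ∀ᵐ ω ∂μ, ∀ n, |(Ycross X (n + 1) y z ω - Ynum X (n + 1) y ω) -
      (Ycross X n y z ω - Ynum X n y ω)| ≤ ((1 : ℝ≥0) : ℝ) := ae_of_all _ fun ω n => by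
    obtain ⟨h₁, h₂⟩ := Ycross_succ_sub_mem_Icc (X := X) (ω := ω) n y z
    obtain ⟨h₃, h₄⟩ := Ynum_succ_sub_mem_Icc (X := X) (ω := ω) n y
    rw [NNReal.coe_one, abs_le]; constructor <;> linarith
  filter_upwards [(h.martingale_Ycross_sub_Ynum hz).bddAbove_range_iff_bddBelow_range hbdd]
    with ω hω
  exact (bddAbove_range_iff_of_bddAbove_sub_iff_bddBelow_sub (fun n => (Ycross_mem_Icc n y z).1)
    (fun n => (Ynum_mem_Icc n y).1) hω).symm

end IsVRRW

end Martingale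

/-- Lemma 2.2 of Tarrès: almost surely, `Υ(x-1) ∩ Υ(x+1)` coincides with the
event that `x` is visited only finitely often. -/
theorem upsilon_both_neighbors_iff_finitely_visited
    {Ω : Type*} {m0 : MeasurableSpace Ω} (μ : Measure Ω) [IsProbabilityMeasure μ]
    (ℱ : Filtration ℕ m0) (X : ℕ → Ω → ℤ) (v0 : ℤ) (h : IsVRRW μ ℱ X v0) (x : ℤ) :
    ∀ᵐ ω ∂μ, (ω ∈ Upsilon X (x - 1) ∧ ω ∈ Upsilon X (x + 1)) ↔
      BddAbove (Set.range fun n => Znum X n x ω) := by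
  filter_upwards [ae_all_iff.2 h.nearest,
    h.ae_bddAbove_Ynum_iff_bddAbove_Ycross (y := x - 1) (z := x) (Or.inl (by ring)),
    h.ae_bddAbove_Ynum_iff_bddAbove_Ycross (y := x + 1) (z := x) (Or.inr (by ring))]
    with ω hnear hleft hright
  rw [Upsilon, Upsilon, mem_ofPred_eq, mem_ofPred_eq, hleft, hright]
  exact bddAbove_Ycross_and_iff_bddAbove_Znum hnear x
end
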